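/- There exists a constant c > 0 such that for all t ≥ 1 and all β ∈ ℝ, ∫_0^∞ e^{−√3·t·v²}·|v − β|^{−1/2} dv ≤ c·t^{−1/4}. -/

import Mathlib

/-!
Split the line at distance `δ` from `β`. Near `β` the Gaussian is at most `1`, and
`∫_{|v-β| ≤ δ} |v - β|^(-1/2) = 4 δ^(1/2)`; away from `β` the singular factor is at most
`δ^(-1/2)`, and the Gaussian `e^(-a v²)` integrates to `√(π/a)`. The scale `δ = a^(-1/2)` balances
the two terms, so the integral is at most `(4 + √π) a^(-1/4)`, and `a = √3 t ≥ t`.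
-/

open MeasureTheory Real Set

section AbsRpow

variable {r : ℝ}

lemma intervalIntegrable_abs_rpow (hr : -1 < r) (a b : ℝ) :
    IntervalIntegrable (fun x : ℝ => |x| ^ r) volume a b := by
  have of_nonneg : ∀ c, 0 ≤ c → IntervalIntegrable (fun x : ℝ => |x| ^ r) volume 0 c :=
    fun c hc => (intervalIntegral.intervalIntegrable_rpow' hr).congr fun x hx => by
      rw [uIoc_of_le hc] at hx
      simp only [abs_of_pos hx.1]
  have from_zero : ∀ c, IntervalIntegrable (fun x : ℝ => |x| ^ r) volume 0 c := by
    intro c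
    rcases le_total 0 c with hc | hc
    · exact of_nonneg c hc
    · rw [IntervalIntegrable.iff_comp_neg, neg_zero]
      simpa only [abs_neg] using of_nonneg (-c) (by linarith)
  exact (from_zero a).symm.trans (from_zero b)

lemma integral_abs_rpow_symmetric (hr : -1 < r) {δ : ℝ} (hδ : 0 ≤ δ) :
    ∫ x in (-δ)..δ, |x| ^ r = 2 * δ ^ (r + 1) / (r + 1) := by
  have right : ∫ x in (0)..δ, |x| ^ r = δ ^ (r + 1) / (r + 1) := by
    rw [intervalIntegral.integral_congr fun x hx => ?_, integral_rpow (Or.inl hr),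
      zero_rpow (by linarith), sub_zero]
    rw [uIcc_of_le hδ] at hx
    simp only [abs_of_nonneg hx.1]
  have left : ∫ x in (-δ)..0, |x| ^ r = ∫ x in (0)..δ, |x| ^ r := by
    simpa only [abs_neg, neg_zero, neg_neg] using
      (intervalIntegral.integral_comp_neg (a := 0) (b := δ) fun x : ℝ => |x| ^ r).symm
  rw [← intervalIntegral.integral_add_adjacent_intervals (b := 0)
    (intervalIntegrable_abs_rpow hr _ _) (intervalIntegrable_abs_rpow hr _ _), left, right]
  ring

lemma integrable_indicator_abs_sub_rpow (hr : -1 < r) (β : ℝ) {δ : ℝ} (hδ : 0 ≤ δ) :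
    Integrable ((Icc (β - δ) (β + δ)).indicator fun v => |v - β| ^ r) := by
  rw [integrable_indicator_iff measurableSet_Icc,
    ← intervalIntegrable_iff_integrableOn_Icc_of_le (by linarith)]
  simpa only [neg_add_eq_sub, add_comm δ] using
    (intervalIntegrable_abs_rpow hr (-δ) δ).comp_sub_right β

lemma integral_indicator_abs_sub_rpow (hr : -1 < r) (β : ℝ) {δ : ℝ} (hδ : 0 ≤ δ) :
    ∫ v, (Icc (β - δ) (β + δ)).indicator (fun v => |v - β| ^ r) v
      = 2 * δ ^ (r + 1) / (r + 1) := by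
  rw [integral_indicator measurableSet_Icc, integral_Icc_eq_integral_Ioc,
    ← intervalIntegral.integral_of_le (by linarith),
    intervalIntegral.integral_comp_sub_right (fun x => |x| ^ r), sub_sub_cancel_left,
    add_sub_cancel_left, integral_abs_rpow_symmetric hr hδ]

end AbsRpow

section SingularWeight

variable {w : ℝ → ℝ} {r : ℝ}

lemma mul_abs_sub_rpow_le (hw₀ : ∀ v, 0 ≤ w v) (hw₁ : ∀ v, w v ≤ 1) (hr : r ≤ 0) (β : ℝ)
    {δ : ℝ} (hδ : 0 < δ) (v : ℝ) :
    w v * |v - β| ^ r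
      ≤ (Icc (β - δ) (β + δ)).indicator (fun v => |v - β| ^ r) v + δ ^ r * w v := by
  by_cases hv : v ∈ Icc (β - δ) (β + δ)
  · rw [indicator_of_mem hv]
    have := mul_le_of_le_one_left (rpow_nonneg (abs_nonneg (v - β)) r) (hw₁ v)
    nlinarith [rpow_nonneg hδ.le r, hw₀ v]
  · have hδv : δ ≤ |v - β| := by
      rw [mem_Icc, not_and_or, not_le, not_le] at hv
      rw [le_abs]
      rcases hv with h | h
      · right; linarith
      · left; linarith
    rw [indicator_of_notMem hv, zero_add, mul_comm]
    exact mul_le_mul_of_nonneg_right (rpow_le_rpow_of_nonpos hδ hδv hr) (hw₀ v)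

variable (hw : Integrable w) (hw₀ : ∀ v, 0 ≤ w v) (hw₁ : ∀ v, w v ≤ 1) (hr₁ : -1 < r)
  (hr₀ : r ≤ 0) (β : ℝ)
include hw hw₀ hw₁ hr₁ hr₀

lemma integrable_mul_abs_sub_rpow : Integrable fun v => w v * |v - β| ^ r := by
  refine Integrable.mono' ((integrable_indicator_abs_sub_rpow hr₁ β zero_le_one).add
    (hw.const_mul (1 ^ r)))
    (hw.aestronglyMeasurable.mul
      (by fun_prop : Measurable fun v => |v - β| ^ r).aestronglyMeasurable)
    (ae_of_all _ fun v => ?_)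
  rw [norm_of_nonneg (mul_nonneg (hw₀ v) (rpow_nonneg (abs_nonneg _) r))]
  exact mul_abs_sub_rpow_le hw₀ hw₁ hr₀ β one_pos v

lemma integral_mul_abs_sub_rpow_le {δ : ℝ} (hδ : 0 < δ) :
    ∫ v, w v * |v - β| ^ r ≤ 2 * δ ^ (r + 1) / (r + 1) + δ ^ r * ∫ v, w v := by
  have hind := integrable_indicator_abs_sub_rpow hr₁ β hδ.le
  calc ∫ v, w v * |v - β| ^ r
      ≤ ∫ v, ((Icc (β - δ) (β + δ)).indicator (fun v => |v - β| ^ r) v + δ ^ r * w v) :=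
        integral_mono (integrable_mul_abs_sub_rpow hw hw₀ hw₁ hr₁ hr₀ β)
          (hind.add (hw.const_mul _)) (mul_abs_sub_rpow_le hw₀ hw₁ hr₀ β hδ)
    _ = 2 * δ ^ (r + 1) / (r + 1) + δ ^ r * ∫ v, w v := by
        rw [integral_add hind (hw.const_mul _), integral_indicator_abs_sub_rpow hr₁ β hδ.le,
          integral_const_mul]

end SingularWeight

section Gaussian

variable {a r : ℝ}

lemma exp_neg_mul_sq_le_one (ha : 0 ≤ a) (v : ℝ) : exp (-a * v ^ 2) ≤ 1 :=
  exp_le_one_iff.mpr (by nlinarith [sq_nonneg v])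

lemma integrable_exp_neg_mul_sq_mul_abs_sub_rpow (ha : 0 < a) (hr₁ : -1 < r) (hr₀ : r ≤ 0)
    (β : ℝ) : Integrable fun v => exp (-a * v ^ 2) * |v - β| ^ r :=
  integrable_mul_abs_sub_rpow (integrable_exp_neg_mul_sq ha) (fun _ => (exp_pos _).le)
    (exp_neg_mul_sq_le_one ha.le) hr₁ hr₀ β

lemma integral_exp_neg_mul_sq_mul_abs_sub_rpow_le (ha : 0 < a) (hr₁ : -1 < r) (hr₀ : r ≤ 0)
    (β : ℝ) :
    ∫ v, exp (-a * v ^ 2) * |v - β| ^ r ≤ (2 / (r + 1) + √π) * a ^ (-(r + 1) / 2) := by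
  set δ := a ^ (-(1 / 2) : ℝ) with hδ
  have hδ_pos : 0 < δ := rpow_pos_of_pos ha _
  have hgauss : √(π / a) = √π * δ := by
    rw [sqrt_div pi_nonneg, sqrt_eq_rpow a, hδ, rpow_neg ha.le, div_eq_mul_inv]
  have hδ_pow : δ ^ (r + 1) = a ^ (-(r + 1) / 2) := by
    rw [hδ, ← rpow_mul ha.le]
    ring_nf
  calc ∫ v, exp (-a * v ^ 2) * |v - β| ^ r
      ≤ 2 * δ ^ (r + 1) / (r + 1) + δ ^ r * ∫ v, exp (-a * v ^ 2) :=
        integral_mul_abs_sub_rpow_le (integrable_exp_neg_mul_sq ha) (fun _ => (exp_pos _).le)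
          (exp_neg_mul_sq_le_one ha.le) hr₁ hr₀ β hδ_pos
    _ = (2 / (r + 1) + √π) * a ^ (-(r + 1) / 2) := by
        rw [integral_gaussian, hgauss, ← mul_assoc, mul_comm _ √π, mul_assoc,
          ← rpow_add_one hδ_pos.ne', hδ_pow]
        ring

end Gaussian

/-- uniform bound ∫₀^∞ e^{−√3 t v²}|v−β|^{−1/2} dv ≤ c t^{−1/4}. -/
theorem ov_gaussian_singular_integral :
    ∃ c : ℝ, 0 < c ∧ ∀ t : ℝ, 1 ≤ t → ∀ β : ℝ,
      (∫ v in Set.Ioi (0 : ℝ),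
          Real.exp (-(Real.sqrt 3) * t * v ^ 2) * |v - β| ^ (-(1 / 2 : ℝ)))
        ≤ c * t ^ (-(1 / 4 : ℝ)) := by
  refine ⟨4 + √π, by positivity, fun t ht β => ?_⟩
  have ht₀ : 0 < t := by linarith
  have ha : 0 < √3 * t := by positivity
  have hr₁ : -1 < -(1 / 2 : ℝ) := by norm_num
  have hr₀ : -(1 / 2 : ℝ) ≤ 0 := by norm_num
  simp only [neg_mul (√3)]
  calc ∫ v in Ioi 0, exp (-(√3 * t) * v ^ 2) * |v - β| ^ (-(1 / 2 : ℝ))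
      ≤ ∫ v, exp (-(√3 * t) * v ^ 2) * |v - β| ^ (-(1 / 2 : ℝ)) :=
        setIntegral_le_integral (integrable_exp_neg_mul_sq_mul_abs_sub_rpow ha hr₁ hr₀ β)
          (ae_of_all _ fun v => mul_nonneg (exp_pos _).le (rpow_nonneg (abs_nonneg _) _))
    _ ≤ (4 + √π) * (√3 * t) ^ (-(1 / 4 : ℝ)) := by
        convert integral_exp_neg_mul_sq_mul_abs_sub_rpow_le ha hr₁ hr₀ β using 3 <;> norm_num
    _ ≤ (4 + √π) * t ^ (-(1 / 4 : ℝ)) := by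
        have : t ≤ √3 * t := le_mul_of_one_le_left ht₀.le (by norm_num [one_le_sqrt])
        exact mul_le_mul_of_nonneg_left (rpow_le_rpow_of_nonpos ht₀ this (by norm_num))
          (by positivity)
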